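/- Let ζ ∈ C_c^∞(ℝ³;[0,∞)) be radially symmetric with ∫ζ = 1 and supp ζ ⊂⊂ B₁, and set ζ_σ(x) := σ^{−3}ζ(x/σ). There exists σ₀′ > 0 (independent of E) such that the following holds. Let E ⊆ ℤ³ be finite, let i ∈ E, and suppose E is a simple coordinate laminate in Q₃(i) with normal e₃, i.e. there is h: ℤ → {0,1} with χ_E(j) = h(j₃) for every j ∈ ℤ³ ∩ Q₃(i). Let T := cl(Q₁(i)) ∩ {x : x₃ = i₃ + 1/2} be the top face of the closed unit cube at i, and assume T ⊆ ∂Q(E), where Q(E) := ⋃_{j∈E} Q₁(j) (equivalently h(i₃) = 1 and h(i₃+1) = 0). Then for every σ ∈ (0, σ₀′] and every x ∈ ℝ³ with dist(x,T) < 2σ one has ∇(χ_{Q(E)} ⋆ ζ_σ)(x) = −λ(x)·e₃ for some λ(x) ≥ 0; in particular ∂₁(χ_{Q(E)} ⋆ ζ_σ)(x) = ∂₂(χ_{Q(E)} ⋆ ζ_σ)(x) = 0 and ∂₃(χ_{Q(E)} ⋆ ζ_σ)(x) ≤ 0. -/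

import Mathlib

/-!
Since `T ⊆ ∂Q(E)`, the laminate has the layer of `i` filled and the layer above it empty, so
within distance `3σ ≤ 1` of the top face `T` the set `Q(E)` coincides with the half-space
`{y₃ < i₃ + 1/2}`. As `ζ_σ` is supported in the ball of radius `σ`, the
mollification therefore agrees near `x` with the mollified half-space indicator. That function
is invariant under horizontal translations and, as `ζ_σ ≥ 0`, nonincreasing in the `e₃`
direction, so its gradient is a nonpositive multiple of `e₃`.
-/

open Set Filter MeasureTheory Metric
open scoped BigOperators ENNReal Topology

noncomputable section

/-- Three-dimensional Euclidean space. -/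
abbrev E3 := EuclideanSpace ℝ (Fin 3)

/-- The half-open cube `Q_ρ(x) = x + ρ[-1/2,1/2)³`. -/
def cube (ρ : ℝ) (x : E3) : Set E3 := {y | ∀ k, x k - ρ / 2 ≤ y k ∧ y k < x k + ρ / 2}

/-- Embedding of `ℤ³` into `ℝ³`. -/
def toE3 (z : Fin 3 → ℤ) : E3 := WithLp.toLp 2 (fun j => (z j : ℝ))

/-- `Q(E) := ⋃_{i ∈ E} Q₁(i)`. -/
def QE (E : Finset (Fin 3 → ℤ)) : Set E3 := ⋃ i ∈ E, cube 1 (toE3 i)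

/-- The mollified indicator `(χ_{Q(E)} ⋆ ζ_σ)(x) = ∫_{Q(E)} σ⁻³ ζ(σ⁻¹(x-y)) dy`. -/
noncomputable def mollify (ζ : E3 → ℝ) (σ : ℝ) (E : Finset (Fin 3 → ℤ)) (x : E3) : ℝ :=
  ∫ y in QE E, σ⁻¹ ^ 3 * ζ (σ⁻¹ • (x - y))

theorem exists_fderiv_apply_eq_neg_mul_apply {ι : Type*} [Fintype ι] [DecidableEq ι]
    {f : EuclideanSpace ℝ ι → ℝ} {x : EuclideanSpace ℝ ι} {k : ι}
    (hinv : ∀ a : EuclideanSpace ℝ ι, a k = 0 → f (x + a) = f x)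
    (hanti : Antitone fun t : ℝ => f (x + t • EuclideanSpace.single k 1)) :
    ∃ lam : ℝ, 0 ≤ lam ∧ ∀ v, fderiv ℝ f x v = -(lam * v k) := by
  by_cases hf : DifferentiableAt ℝ f x
  swap
  · exact ⟨0, le_rfl, fun v => by simp [fderiv_zero_of_not_differentiableAt hf]⟩
  set e : EuclideanSpace ℝ ι := EuclideanSpace.single k 1
  have hline : ∀ v, fderiv ℝ f x v = deriv (fun t : ℝ => f (x + t • v)) 0 := fun v =>
    hf.lineDeriv_eq_fderiv.symm
  have hflat : ∀ a : EuclideanSpace ℝ ι, a k = 0 → fderiv ℝ f x a = 0 := by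
    intro a ha
    have hconst : (fun t : ℝ => f (x + t • a)) = fun _ => f x :=
      funext fun t => hinv (t • a) (by simp [ha])
    rw [hline, hconst, deriv_const]
  refine ⟨-fderiv ℝ f x e, neg_nonneg.mpr (hline e ▸ hanti.deriv_nonpos), fun v => ?_⟩
  have hsplit : v = (v - v k • e) + v k • e := by abel
  calc fderiv ℝ f x v = fderiv ℝ f x (v - v k • e) + v k * fderiv ℝ f x e := by
        conv_lhs => rw [hsplit]
        rw [map_add, map_smul, smul_eq_mul]
    _ = -(-fderiv ℝ f x e * v k) := by
        rw [hflat _ (by simp [e])]; ring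

theorem setIntegral_congr_set_of_support {α : Type*} [MeasurableSpace α] {μ : Measure α}
    {s t : Set α} (hs : MeasurableSet s) (ht : MeasurableSet t) {g : α → ℝ}
    (hst : ∀ y, g y ≠ 0 → (y ∈ s ↔ y ∈ t)) : ∫ y in s, g y ∂μ = ∫ y in t, g y ∂μ := by
  rw [← integral_indicator hs, ← integral_indicator ht]
  classical
  congr 1 with y
  by_cases hy : g y = 0
  · simp only [indicator_apply, hy, ite_self]
  · simp only [indicator_apply, hst y hy]

section HalfSpace

variable {ι : Type*} [Fintype ι]

def halfSpaceConv (K : EuclideanSpace ℝ ι → ℝ) (k : ι) (c : ℝ) (x : EuclideanSpace ℝ ι) : ℝ :=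
  ∫ y in {y : EuclideanSpace ℝ ι | y k < c}, K (x - y)

theorem measurableSet_halfSpace (k : ι) (c : ℝ) :
    MeasurableSet {y : EuclideanSpace ℝ ι | y k < c} :=
  measurableSet_lt (EuclideanSpace.proj k).continuous.measurable measurable_const

theorem halfSpaceConv_add (K : EuclideanSpace ℝ ι → ℝ) (k : ι) (c : ℝ)
    (x a : EuclideanSpace ℝ ι) :
    halfSpaceConv K k c (x + a) = halfSpaceConv K k (c - a k) x := by
  simp only [halfSpaceConv, ← integral_indicator (measurableSet_halfSpace _ _)]
  rw [← integral_add_right_eq_self _ a]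
  congr 1 with y
  simp only [indicator, mem_ofPred_eq, PiLp.add_apply, lt_sub_iff_add_lt,
    add_sub_add_right_eq_sub]

theorem halfSpaceConv_mono {K : EuclideanSpace ℝ ι → ℝ} (hK : Integrable K) (hK₀ : 0 ≤ K)
    (k : ι) (x : EuclideanSpace ℝ ι) : Monotone fun c => halfSpaceConv K k c x :=
  fun _ _ hcc' => setIntegral_mono_set (hK.comp_sub_left x).integrableOn
    (ae_of_all _ fun y => hK₀ (x - y)) (ae_of_all _ fun _ hy => lt_of_lt_of_le hy hcc')

theorem exists_fderiv_halfSpaceConv [DecidableEq ι] {K : EuclideanSpace ℝ ι → ℝ}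
    (hK : Integrable K) (hK₀ : 0 ≤ K) (k : ι) (c : ℝ) (x : EuclideanSpace ℝ ι) :
    ∃ lam : ℝ, 0 ≤ lam ∧ ∀ v, fderiv ℝ (halfSpaceConv K k c) x v = -(lam * v k) := by
  refine exists_fderiv_apply_eq_neg_mul_apply (fun a ha => by rw [halfSpaceConv_add, ha, sub_zero])
    fun t t' htt' => ?_
  simp only [halfSpaceConv_add, PiLp.smul_apply, PiLp.single_apply, ite_true, smul_eq_mul,
    mul_one]
  exact halfSpaceConv_mono hK hK₀ k x (by linarith)

end HalfSpace

def rescaledKernel (ζ : E3 → ℝ) (σ : ℝ) (z : E3) : ℝ := σ⁻¹ ^ 3 * ζ (σ⁻¹ • z)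

section Kernel

variable {ζ : E3 → ℝ} {σ : ℝ}

theorem integrable_rescaledKernel (hζ : Continuous ζ) (hcs : HasCompactSupport ζ) (hσ : σ ≠ 0) :
    Integrable (rescaledKernel ζ σ) :=
  ((hζ.integrable_of_hasCompactSupport hcs).comp_smul (inv_ne_zero hσ)).const_mul _

theorem rescaledKernel_nonneg (hσ : 0 ≤ σ) (hpos : ∀ x, 0 ≤ ζ x) : 0 ≤ rescaledKernel ζ σ :=
  fun _ => mul_nonneg (by positivity) (hpos _)

theorem norm_lt_of_rescaledKernel_ne_zero (hσ : 0 < σ) (hsupp : tsupport ζ ⊆ ball 0 1) {z : E3}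
    (hz : rescaledKernel ζ σ z ≠ 0) : ‖z‖ < σ := by
  have hmem : σ⁻¹ • z ∈ ball (0 : E3) 1 :=
    hsupp (subset_tsupport ζ (right_ne_zero_of_mul hz))
  rw [mem_ball_zero_iff, norm_smul, norm_inv, Real.norm_of_nonneg hσ.le] at hmem
  exact (inv_mul_lt_iff₀ hσ).mp hmem |>.trans_eq (mul_one σ)

end Kernel

@[simp] theorem toE3_apply (z : Fin 3 → ℤ) (k : Fin 3) : toE3 z k = z k := rfl

theorem self_mem_cube {ρ : ℝ} (hρ : 0 < ρ) (x : E3) : x ∈ cube ρ x :=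
  fun _ => ⟨by linarith, by linarith⟩

theorem measurableSet_cube (ρ : ℝ) (x : E3) : MeasurableSet (cube ρ x) := by
  simp only [cube, ofPred_forall]
  exact .iInter fun k =>
    (measurableSet_le measurable_const (EuclideanSpace.proj k).continuous.measurable).inter
      (measurableSet_lt (EuclideanSpace.proj k).continuous.measurable measurable_const)

theorem measurableSet_QE (E : Finset (Fin 3 → ℤ)) : MeasurableSet (QE E) :=
  .biUnion E.countable_toSet fun i _ => measurableSet_cube 1 (toE3 i)

theorem mem_cube_one_iff (j : Fin 3 → ℤ) (y : E3) :
    y ∈ cube 1 (toE3 j) ↔ j = fun k => ⌊y k + 1 / 2⌋ := by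
  simp only [cube, mem_ofPred_eq, toE3_apply, funext_iff, eq_comm (a := j _), Int.floor_eq_iff]
  refine forall_congr' fun k => ?_
  constructor <;> rintro ⟨h₁, h₂⟩ <;> constructor <;> linarith

theorem mem_QE_iff (E : Finset (Fin 3 → ℤ)) (y : E3) :
    y ∈ QE E ↔ (fun k => ⌊y k + 1 / 2⌋) ∈ E := by
  simp [QE, mem_cube_one_iff]

theorem mem_QE_iff_of_mem_cube_three {E : Finset (Fin 3 → ℤ)} {i : Fin 3 → ℤ} {h : ℤ → Prop}
    (hh : ∀ j : Fin 3 → ℤ, toE3 j ∈ cube 3 (toE3 i) → (j ∈ E ↔ h (j 2)))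
    {y : E3} (hy : y ∈ cube 3 (toE3 i)) : y ∈ QE E ↔ h ⌊y 2 + 1 / 2⌋ := by
  rw [mem_QE_iff]
  refine hh _ fun k => ?_
  obtain ⟨h₁, h₂⟩ := hy k
  simp only [toE3_apply] at h₁ h₂ ⊢
  have hlo : i k - 1 ≤ ⌊y k + 1 / 2⌋ := Int.le_floor.mpr (by push_cast; linarith)
  have hhi : ⌊y k + 1 / 2⌋ ≤ i k + 1 := Int.lt_add_one_iff.mp <|
    Int.floor_lt.mpr (by push_cast; linarith)
  have hlo' : ((i k - 1 : ℤ) : ℝ) ≤ ⌊y k + 1 / 2⌋ := by exact_mod_cast hlo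
  have hhi' : (⌊y k + 1 / 2⌋ : ℝ) ≤ ((i k + 1 : ℤ) : ℝ) := by exact_mod_cast hhi
  push_cast at hlo' hhi'
  constructor <;> linarith

theorem abs_sub_le_half_of_mem_closure_cube {x y : E3} (hy : y ∈ closure (cube 1 x))
    (k : Fin 3) : |y k - x k| ≤ 1 / 2 := by
  have hclosed : IsClosed {y : E3 | |y k - x k| ≤ 1 / 2} :=
    isClosed_le (((EuclideanSpace.proj k).continuous.sub continuous_const).abs) continuous_const
  refine closure_minimal (fun z hz => ?_) hclosed hy
  obtain ⟨h₁, h₂⟩ := hz k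
  show |z k - x k| ≤ 1 / 2
  rw [abs_le]
  constructor <;> linarith

theorem mem_cube_three_of_dist_lt {i : Fin 3 → ℤ} {p y : E3}
    (hp : p ∈ closure (cube 1 (toE3 i))) (hy : dist y p < 1) : y ∈ cube 3 (toE3 i) := by
  intro k
  have hyp := abs_lt.mp ((PiLp.dist_apply_le y p k).trans_lt hy)
  have hpi := abs_le.mp (abs_sub_le_half_of_mem_closure_cube hp k)
  constructor <;> linarith [hyp.1, hyp.2, hpi.1, hpi.2]

theorem floor_add_half_eq_ite {n : ℤ} {t : ℝ} (ht : |t - (n + 1 / 2)| < 1) :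
    ⌊t + 1 / 2⌋ = if t < n + 1 / 2 then n else n + 1 := by
  obtain ⟨h₁, h₂⟩ := abs_lt.mp ht
  split_ifs with hlt <;> rw [Int.floor_eq_iff] <;> push_cast <;> constructor <;> linarith

def topFace (i : Fin 3 → ℤ) : Set E3 :=
  closure (cube 1 (toE3 i)) ∩ {x : E3 | x 2 = (i 2 : ℝ) + 1 / 2}

theorem toE3_add_half_single_mem_topFace (i : Fin 3 → ℤ) :
    toE3 i + (1 / 2 : ℝ) • EuclideanSpace.single 2 1 ∈ topFace i := by
  refine ⟨?_, by simp⟩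
  have hlim : Tendsto (fun t : ℝ => toE3 i + t • EuclideanSpace.single 2 1) (𝓝[<] (1 / 2))
      (𝓝 (toE3 i + (1 / 2 : ℝ) • EuclideanSpace.single 2 1)) :=
    ((continuous_const.add (continuous_id.smul continuous_const)).tendsto _).mono_left
      nhdsWithin_le_nhds
  refine mem_closure_of_tendsto hlim ?_
  filter_upwards [Ioo_mem_nhdsLT (by norm_num : (0 : ℝ) < 1 / 2)] with t ⟨ht₀, ht₁⟩ k
  fin_cases k <;> simp
  constructor <;> linarith

theorem mem_QE_iff_of_dist_topFace_lt {E : Finset (Fin 3 → ℤ)} {i : Fin 3 → ℤ} {h : ℤ → Prop}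
    (hh : ∀ j : Fin 3 → ℤ, toE3 j ∈ cube 3 (toE3 i) → (j ∈ E ↔ h (j 2)))
    {p y : E3} (hp : p ∈ topFace i) (hy : dist y p < 1) :
    y ∈ QE E ↔ h (if y 2 < i 2 + 1 / 2 then i 2 else i 2 + 1) := by
  rw [mem_QE_iff_of_mem_cube_three hh (mem_cube_three_of_dist_lt hp.1 hy), floor_add_half_eq_ite]
  rw [← show p 2 = i 2 + 1 / 2 from hp.2]
  exact (PiLp.dist_apply_le y p 2).trans_lt hy

theorem not_above_of_topFace_subset_frontier {E : Finset (Fin 3 → ℤ)} {i : Fin 3 → ℤ}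
    {h : ℤ → Prop} (hh : ∀ j : Fin 3 → ℤ, toE3 j ∈ cube 3 (toE3 i) → (j ∈ E ↔ h (j 2)))
    (hfr : topFace i ⊆ frontier (QE E)) (hbot : h (i 2)) : ¬ h (i 2 + 1) := by
  intro htop
  have hp := toE3_add_half_single_mem_topFace i
  have hball : ball _ 1 ⊆ QE E := fun y hy =>
    (mem_QE_iff_of_dist_topFace_lt hh hp hy).mpr (by split_ifs <;> assumption)
  exact (hfr hp).2 (mem_interior.mpr ⟨_, hball, isOpen_ball, mem_ball_self one_pos⟩)

theorem statement6_general (ζ : E3 → ℝ)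
    (hsm : ContDiff ℝ (⊤ : ℕ∞) ζ) (hcs : HasCompactSupport ζ)
    (hpos : ∀ x, 0 ≤ ζ x) (hsupp : tsupport ζ ⊆ Metric.ball 0 1) :
    ∃ σ₀' : ℝ, 0 < σ₀' ∧
      ∀ (E : Finset (Fin 3 → ℤ)) (i : Fin 3 → ℤ), i ∈ E →
      ∀ h : ℤ → Prop,
        (∀ j : Fin 3 → ℤ, toE3 j ∈ cube 3 (toE3 i) → (j ∈ E ↔ h (j 2))) →
        closure (cube 1 (toE3 i)) ∩ {x : E3 | x 2 = (i 2 : ℝ) + 1 / 2} ⊆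
          frontier (QE E) →
        ∀ σ : ℝ, 0 < σ → σ ≤ σ₀' →
        ∀ x : E3,
          Metric.infDist x
              (closure (cube 1 (toE3 i)) ∩ {x : E3 | x 2 = (i 2 : ℝ) + 1 / 2}) <
            2 * σ →
          ∃ lam : ℝ, 0 ≤ lam ∧
            ∀ v : E3, fderiv ℝ (mollify ζ σ E) x v = -(lam * v 2) := by
  refine ⟨1 / 3, by norm_num, fun E i hi h hh hfr σ hσ hσ₀ x hx => ?_⟩
  have hbot : h (i 2) := (hh i (self_mem_cube three_pos _)).mp hi
  have htop : ¬ h (i 2 + 1) := not_above_of_topFace_subset_frontier hh hfr hbot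
  have hlocal : mollify ζ σ E =ᶠ[𝓝 x] halfSpaceConv (rescaledKernel ζ σ) 2 (i 2 + 1 / 2) := by
    filter_upwards [(isOpen_lt (continuous_infDist_pt _) continuous_const).mem_nhds hx]
      with x' hx'
    obtain ⟨p, hp, hpx⟩ := (infDist_lt_iff ⟨_, toE3_add_half_single_mem_topFace i⟩).mp hx'
    refine setIntegral_congr_set_of_support (measurableSet_QE E) (measurableSet_halfSpace 2 _)
      fun y hy => ?_
    have hyx : dist y x' < σ := by
      rw [dist_comm, dist_eq_norm]; exact norm_lt_of_rescaledKernel_ne_zero hσ hsupp hy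
    rw [mem_QE_iff_of_dist_topFace_lt hh hp (by linarith [dist_triangle y x' p])]
    split_ifs with hlt
    · exact iff_of_true hbot hlt
    · exact iff_of_false htop hlt
  obtain ⟨lam, hlam, hderiv⟩ := exists_fderiv_halfSpaceConv
    (integrable_rescaledKernel hsm.continuous hcs hσ.ne') (rescaledKernel_nonneg hσ.le hpos)
    (2 : Fin 3) (i 2 + 1 / 2) x
  exact ⟨lam, hlam, fun v => by rw [hlocal.fderiv_eq]; exact hderiv v⟩

/-- Near a flat laminate interface the gradient of the mollified
indicator points in the direction `-e₃`:  there is `σ₀' > 0`, independent of `E`, such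
that whenever `E` is a simple coordinate laminate with normal `e₃` in `Q₃(i)` around
`i ∈ E`, and the top face `T` of the closed unit cube at `i` lies on `∂Q(E)`, then for
all `σ ∈ (0,σ₀']` and all `x` with `dist(x,T) < 2σ` one has
`∇(χ_{Q(E)} ⋆ ζ_σ)(x) = -λ(x)·e₃` with `λ(x) ≥ 0`. -/
theorem statement6 (ζ : E3 → ℝ)
    (hsm : ContDiff ℝ (⊤ : ℕ∞) ζ) (hcs : HasCompactSupport ζ)
    (hpos : ∀ x, 0 ≤ ζ x) (hrad : ∀ x y : E3, ‖x‖ = ‖y‖ → ζ x = ζ y)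
    (hint : (∫ x, ζ x) = 1) (hsupp : tsupport ζ ⊆ Metric.ball 0 1) :
    ∃ σ₀' : ℝ, 0 < σ₀' ∧
      ∀ (E : Finset (Fin 3 → ℤ)) (i : Fin 3 → ℤ), i ∈ E →
      ∀ h : ℤ → Prop,
        (∀ j : Fin 3 → ℤ, toE3 j ∈ cube 3 (toE3 i) → (j ∈ E ↔ h (j 2))) →
        closure (cube 1 (toE3 i)) ∩ {x : E3 | x 2 = (i 2 : ℝ) + 1 / 2} ⊆
          frontier (QE E) →
        ∀ σ : ℝ, 0 < σ → σ ≤ σ₀' →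
        ∀ x : E3,
          Metric.infDist x
              (closure (cube 1 (toE3 i)) ∩ {x : E3 | x 2 = (i 2 : ℝ) + 1 / 2}) <
            2 * σ →
          ∃ lam : ℝ, 0 ≤ lam ∧
            ∀ v : E3, fderiv ℝ (mollify ζ σ E) x v = -(lam * v 2) :=
  statement6_general ζ hsm hcs hpos hsupp
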